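/- If C is a continuous c-tree on positions 1,…,L, then the d-tree obtained from C by the head projection (an arc from h to m for every proper node with lexical head h and every non-head child of it with lexical head m ≠ h) is projective. -/
import Mathlib


/-- A node of a constituent tree: either a pre-terminal over position `i`
(standing for the pre-terminal `(p_i, i, {i})` together with its leaf child `i`),
or a proper node `node Z h cs` with label `Z`, lexical head `h` and children `cs`. -/
inductive CNode (L : ℕ) (Sg : Type) : Type where
  | pre  : Fin L → CNode L Sg
  | node : Sg → Fin L → List (CNode L Sg) → CNode L Sg

namespace CNode

variable {L : ℕ} {Sg : Type}

/-- The lexical head of a node. -/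
def head : CNode L Sg → Fin L
  | pre i => i
  | node _ h _ => h

mutual
  /-- The yield of a node. -/
  def yield : CNode L Sg → Finset (Fin L)
    | pre i => {i}
    | node _ _ cs => yieldList cs
  def yieldList : List (CNode L Sg) → Finset (Fin L)
    | [] => ∅
    | c :: cs => yield c ∪ yieldList cs
end

mutual
  /-- The list of all subtrees (nodes) of a tree, including itself. -/
  def subs : CNode L Sg → List (CNode L Sg)
    | pre i => [pre i]
    | node Z h cs => node Z h cs :: subsList cs
  def subsList : List (CNode L Sg) → List (CNode L Sg)
    | [] => []
    | c :: cs => subs c ++ subsList cs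
end

/-- Well-formedness of a c-tree: children have pairwise disjoint yields and
every proper node has exactly one child whose head is the node's head. -/
inductive Valid : CNode L Sg → Prop where
  | pre (i : Fin L) : Valid (pre i)
  | node (Z : Sg) (h : Fin L) (cs : List (CNode L Sg)) :
      (∀ c ∈ cs, Valid c) →
      cs.Pairwise (fun a b => Disjoint a.yield b.yield) →
      (∃! c, c ∈ cs ∧ head c = h) →
      Valid (node Z h cs)

/-- A c-tree on positions `1,…,L`: a well-formed tree whose leaves are exactly
the `L` positions, each appearing exactly once. -/
def IsCTree (t : CNode L Sg) : Prop := Valid t ∧ t.yield = Finset.univ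

/-- Every proper node has exactly two children. -/
def Binary (t : CNode L Sg) : Prop :=
  ∀ s ∈ t.subs, ∀ Z h cs, s = node Z h cs → cs.length = 2

/-- No proper node has exactly one child. -/
def Unaryless (t : CNode L Sg) : Prop :=
  ∀ s ∈ t.subs, ∀ Z h cs, s = node Z h cs → cs.length ≠ 1

/-- Every node's yield is an interval of consecutive positions. -/
def Continuous (t : CNode L Sg) : Prop :=
  ∀ s ∈ t.subs, ∃ a b : Fin L, s.yield = Finset.Icc a b

/-- `AttachesAt C h m Z n`: `n` is a proper node of `C` with label `Z` and lexical
head `h`, having a (non-head) child whose lexical head is `m ≠ h`;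
i.e. the modifier `m` attaches to `h` at the spine node `n`, generating an arc
`(h, m)` labeled `Z`. -/
def AttachesAt (C : CNode L Sg) (h m : Fin L) (Z : Sg) (n : CNode L Sg) : Prop :=
  n ∈ C.subs ∧ ∃ cs, n = node Z h cs ∧ m ≠ h ∧ ∃ c ∈ cs, head c = m

/-- A proper node with head `h` having at least one non-head child
(i.e. a node of `h`'s spine at which some modifier attaches). -/
def attachB (h : Fin L) : CNode L Sg → Bool
  | pre _ => false
  | node _ h' cs => h' = h && cs.any (fun c => head c != h)

/-- The position, counted from the bottom of the spine of `h`, of the spine node `n`: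
the number of proper nodes with head `h` lying weakly below `n` at which modifiers
attach.  This is the order index (`#1, #2, …`) of the attachment event at `n`. -/
def spineIdx (h : Fin L) (n : CNode L Sg) : ℕ :=
  n.subs.countP (attachB h)

end CNode

namespace CNode

variable {L : ℕ} {Sg : Type}

theorem mem_subsList {u : CNode L Sg} {cs : List (CNode L Sg)} :
    u ∈ subsList cs ↔ ∃ c ∈ cs, u ∈ c.subs := by
  induction cs with
  | nil => simp [subsList]
  | cons c cs ih => simp [subsList, ih]

theorem mem_yieldList {d : Fin L} {cs : List (CNode L Sg)} :
    d ∈ yieldList cs ↔ ∃ c ∈ cs, d ∈ c.yield := by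
  induction cs with
  | nil => simp [yieldList]
  | cons c cs ih => simp [yieldList, ih]

theorem mem_subs_self (t : CNode L Sg) : t ∈ t.subs := by
  cases t <;> simp [subs]

theorem sizeOf_lt_of_mem_cs {c : CNode L Sg} {cs : List (CNode L Sg)} (h : c ∈ cs)
    (Z : Sg) (hd : Fin L) : sizeOf c < sizeOf (CNode.node Z hd cs) := by
  have := List.sizeOf_lt_of_mem h
  simp only [CNode.node.sizeOf_spec]
  omega

theorem subs_trans : ∀ (t s u : CNode L Sg), s ∈ t.subs → u ∈ s.subs → u ∈ t.subs
  | pre i, s, u, hs, hu => by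
    simp [subs] at hs
    subst hs
    exact hu
  | node Z h cs, s, u, hs, hu => by
    simp only [subs, List.mem_cons] at hs ⊢
    rcases hs with rfl | hs
    · simpa [subs] using hu
    · rcases mem_subsList.1 hs with ⟨c, hc, hsc⟩
      have := subs_trans c s u hsc hu
      exact Or.inr (mem_subsList.2 ⟨c, hc, this⟩)
termination_by t => sizeOf t
decreasing_by exact sizeOf_lt_of_mem_cs hc Z h

theorem mem_subs_of_child {C : CNode L Sg} {Z : Sg} {h : Fin L} {cs : List (CNode L Sg)}
    (hn : CNode.node Z h cs ∈ C.subs) {c : CNode L Sg} (hc : c ∈ cs) : c ∈ C.subs := by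
  refine subs_trans C (node Z h cs) c hn ?_
  simp only [subs, List.mem_cons]
  exact Or.inr (mem_subsList.2 ⟨c, hc, mem_subs_self c⟩)

theorem valid_of_mem_subs : ∀ (t : CNode L Sg), Valid t → ∀ s ∈ t.subs, Valid s
  | pre i, _, s, hs => by
    simp [subs] at hs; subst hs; exact Valid.pre i
  | node Z h cs, hv, s, hs => by
    simp only [subs, List.mem_cons] at hs
    rcases hs with rfl | hs
    · exact hv
    · rcases mem_subsList.1 hs with ⟨c, hc, hsc⟩
      have hvc : Valid c := by
        cases hv with
        | node _ _ _ hall _ _ => exact hall c hc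
      exact valid_of_mem_subs c hvc s hsc
termination_by t => sizeOf t
decreasing_by exact sizeOf_lt_of_mem_cs hc Z h

theorem yield_subset_yieldList {c : CNode L Sg} {cs : List (CNode L Sg)} (hc : c ∈ cs) :
    c.yield ⊆ yieldList cs := fun d hd => mem_yieldList.2 ⟨c, hc, hd⟩

theorem head_mem_yield : ∀ (t : CNode L Sg), Valid t → t.head ∈ t.yield
  | pre i, _ => by simp [head, yield]
  | node Z h cs, hv => by
    have hall : ∀ c ∈ cs, Valid c := by
      cases hv with | node _ _ _ ha _ _ => exact ha
    have huniq : ∃ c, c ∈ cs ∧ head c = h := by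
      cases hv with | node _ _ _ _ _ hu => exact hu.exists
    obtain ⟨c, hc, hch⟩ := huniq
    have := head_mem_yield c (hall c hc)
    rw [hch] at this
    simpa [head, yield] using yield_subset_yieldList hc this
termination_by t => sizeOf t
decreasing_by exact sizeOf_lt_of_mem_cs hc Z h

theorem head_reaches (C : CNode L Sg) (hC : Valid C) :
    ∀ (n : CNode L Sg), n ∈ C.subs → ∀ d ∈ n.yield,
      Relation.ReflTransGen
        (fun a b => ∃ (Z : Sg) (n' : CNode L Sg), AttachesAt C a b Z n') n.head d
  | pre i, _, d, hd => by
    simp [yield] at hd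
    subst hd
    exact Relation.ReflTransGen.refl
  | node Z h cs, hmem, d, hd => by
    simp only [yield] at hd
    rcases mem_yieldList.1 hd with ⟨c, hc, hdc⟩
    have hcmem : c ∈ C.subs := mem_subs_of_child hmem hc
    have hrec := head_reaches C hC c hcmem d hdc
    by_cases hch : c.head = h
    · rw [hch] at hrec; exact hrec
    · refine Relation.ReflTransGen.head ?_ hrec
      exact ⟨Z, node Z h cs, hmem, cs, rfl, hch, c, hc, rfl⟩
termination_by n => sizeOf n
decreasing_by exact sizeOf_lt_of_mem_cs hc Z h

end CNode

/-- If `C` is a continuous c-tree on positions `1,…,L`, then the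
d-tree obtained from `C` by the head projection — with an arc from `h` to `m` for
every proper node with lexical head `h` and every non-head child of it with lexical
head `m ≠ h` — is projective: for every such arc `(h,m)` and every position `d`
strictly between `h` and `m`, `d` is reachable from `h` by a directed path of arcs. -/
theorem stmt4 (L : ℕ) (Sg P : Type) (pos : Fin L → P)
    (C : CNode L Sg) (hC : CNode.IsCTree C) (hcont : CNode.Continuous C) :
    ∀ h m : Fin L, (∃ (Z : Sg) (n : CNode L Sg), CNode.AttachesAt C h m Z n) →
      ∀ d : Fin L, min h m < d → d < max h m →
        Relation.ReflTransGen
          (fun a b => ∃ (Z : Sg) (n : CNode L Sg), CNode.AttachesAt C a b Z n) h d := by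
  obtain ⟨hv, -⟩ := hC
  intro h m ⟨Z, n, hatt⟩ d hd1 hd2
  obtain ⟨hmem, cs, rfl, hmh, c, hc, hch⟩ := hatt
  have hvn : CNode.Valid (CNode.node Z h cs) := CNode.valid_of_mem_subs C hv _ hmem
  have hh : h ∈ (CNode.node Z h cs).yield := by
    have := CNode.head_mem_yield _ hvn
    simpa [CNode.head] using this
  have hvc : CNode.Valid c := by
    cases hvn with
    | node _ _ _ hall _ _ => exact hall c hc
  have hm : m ∈ (CNode.node Z h cs).yield := by
    have := CNode.head_mem_yield c hvc
    rw [hch] at this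
    simpa [CNode.yield] using CNode.yield_subset_yieldList hc this
  obtain ⟨a, b, hab⟩ := hcont _ hmem
  rw [hab, Finset.mem_Icc] at hh hm
  have hdmem : d ∈ (CNode.node Z h cs).yield := by
    rw [hab, Finset.mem_Icc]
    constructor
    · exact le_of_lt (lt_of_le_of_lt (le_min hh.1 hm.1) hd1)
    · exact le_of_lt (lt_of_lt_of_le hd2 (max_le hh.2 hm.2))
  have := CNode.head_reaches C hv _ hmem d hdmem
  simpa [CNode.head] using this
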